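/- arXiv:2604.27986 — 5 statements merged into one kernel-verified Lean document; each statement's English description precedes it below -/
import Mathlib

section
/- The value of c(1/4) = ∑_{n≥0} C_n (1/4)^n, where C_n = binom(2n,n)/(n+1) is the n-th Catalan number, is 2, i.e. ∑_{n≥0} binom(2n,n)/(4^n·(n+1)) = 2. -/
open Filter Finset

private noncomputable def bq (n : ℕ) : ℝ := (Nat.centralBinom n : ℝ) / 4 ^ n

private lemma bq_nonneg (n : ℕ) : 0 ≤ bq n := by
  unfold bq; positivity

private lemma bq_succ (n : ℕ) :
    bq (n + 1) = bq n * ((2 * n + 1) / (2 * n + 2)) := by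
  have h := Nat.succ_mul_centralBinom_succ n
  have hc : ((n : ℝ) + 1) * (Nat.centralBinom (n + 1) : ℝ)
      = 2 * (2 * n + 1) * (Nat.centralBinom n : ℝ) := by exact_mod_cast h
  unfold bq
  rw [pow_succ]
  field_simp
  linear_combination (2:ℝ) * hc

private lemma bq_sq (n : ℕ) : (bq n) ^ 2 ≤ 1 / (n + 1) := by
  induction n with
  | zero => simp [bq, Nat.centralBinom]
  | succ n ih =>
    rw [bq_succ]
    have hn : (0:ℝ) < (n:ℝ) + 1 := by positivity
    rw [mul_pow]
    have h1 : ((2 * (n:ℝ) + 1) / (2 * n + 2)) ^ 2 ≤ ((n:ℝ)+1) / ((n:ℝ)+2) := by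
      rw [div_pow, div_le_div_iff₀ (by positivity) (by positivity)]
      ring_nf
      nlinarith [sq_nonneg ((n:ℝ))]
    calc bq n ^ 2 * ((2 * (n:ℝ) + 1) / (2 * n + 2)) ^ 2
        ≤ (1 / ((n:ℝ)+1)) * (((n:ℝ)+1) / ((n:ℝ)+2)) := by
          apply mul_le_mul ih h1 (by positivity) (by positivity)
      _ = 1 / ((n:ℝ)+2) := by field_simp
      _ = 1 / ((n:ℕ).succ + 1 : ℝ) := by push_cast; ring

private lemma bq_tendsto : Tendsto bq atTop (nhds 0) := by
  have h1 : Tendsto (fun n : ℕ => Real.sqrt (1 / (n + 1))) atTop (nhds 0) := by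
    have := (Real.continuous_sqrt.tendsto 0).comp tendsto_one_div_add_atTop_nhds_zero_nat
    simp only [Function.comp_def] at this
    simpa [Real.sqrt_inv] using this
  apply squeeze_zero bq_nonneg _ h1
  intro n
  have := bq_sq n
  have h2 : bq n = Real.sqrt ((bq n) ^ 2) := by
    rw [Real.sqrt_sq (bq_nonneg n)]
  rw [h2]
  exact Real.sqrt_le_sqrt this

private lemma cat_eq (n : ℕ) :
    (catalan n : ℝ) * (1 / 4) ^ n = 2 * bq n - 2 * bq (n + 1) := by
  rw [bq_succ]
  have hc : ((n : ℝ) + 1) * (catalan n : ℝ) = (Nat.centralBinom n : ℝ) := by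
    exact_mod_cast succ_mul_catalan_eq_centralBinom n
  unfold bq
  have hn : (0:ℝ) < (n:ℝ) + 1 := by positivity
  have h4 : (0:ℝ) < 4 ^ n := by positivity
  rw [div_pow, one_pow]
  field_simp
  linear_combination hc

/-- `∑_{n≥0} Cₙ (1/4)ⁿ = 2`, where `Cₙ` is the `n`-th Catalan number. -/
theorem catalan_sum_quarter :
    HasSum (fun n : ℕ => (catalan n : ℝ) * (1 / 4) ^ n) 2 := by
  rw [hasSum_iff_tendsto_nat_of_nonneg (fun n => by positivity)]
  have heq : ∀ N : ℕ, ∑ n ∈ Finset.range N, (catalan n : ℝ) * (1 / 4) ^ n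
      = 2 * bq 0 - 2 * bq N := by
    intro N
    rw [← Finset.sum_range_sub' (fun n => 2 * bq n) N]
    exact Finset.sum_congr rfl fun n _ => cat_eq n
  simp only [heq]
  have hb0 : bq 0 = 1 := by simp [bq, Nat.centralBinom]
  rw [hb0]
  have : Tendsto (fun N : ℕ => 2 * (1:ℝ) - 2 * bq N) atTop (nhds (2 * 1 - 2 * 0)) :=
    (tendsto_const_nhds.sub ((bq_tendsto.const_mul 2)))
  simpa using this
end

section
/- The series ∑_{i≥0} (2i+1)·C_i / 2^{2i+1}, where C_i is the i-th Catalan number, diverges to +∞. (This expresses that the expected hitting time of 0 by a simple symmetric random walk started at 1 is infinite.) -/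
open scoped ENNReal NNReal

lemma catalan_nat_bound (i : ℕ) :
    2 ^ (2 * i + 1) ≤ (2 * i + 1) * catalan i * (4 * (i + 1)) := by
  rcases Nat.eq_zero_or_pos i with h | h
  · subst h; norm_num
  · have h1 : 4 ^ i ≤ 2 * i * Nat.centralBinom i :=
      Nat.four_pow_le_two_mul_self_mul_centralBinom i h
    have h2 : (i + 1) * catalan i = Nat.centralBinom i :=
      succ_mul_catalan_eq_centralBinom i
    have h3 : 2 ^ (2 * i + 1) = 2 * 4 ^ i := by
      rw [pow_succ, pow_mul]; ring
    have h4 : 2 * (2 * i * Nat.centralBinom i) ≤ (2 * i + 1) * catalan i * (4 * (i + 1)) := by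
      rw [← h2]; nlinarith [Nat.zero_le (catalan i)]
    omega

lemma one_div_succ_tsum_top : (∑' i : ℕ, (1 : ℝ≥0∞) / (i + 1)) = ⊤ := by
  by_contra h
  have hne : (∑' i : ℕ, (((1 : ℝ≥0) / (i + 1) : ℝ≥0) : ℝ≥0∞)) ≠ ⊤ := by
    have hc : ∀ i : ℕ, (((1 : ℝ≥0) / (i + 1) : ℝ≥0) : ℝ≥0∞) = 1 / (i + 1) := by
      intro i
      rw [ENNReal.coe_div (by positivity)]
      push_cast
      ring
    simpa only [hc] using h
  have hsum : Summable (fun i : ℕ => (1 : ℝ≥0) / (i + 1)) :=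
    ENNReal.tsum_coe_ne_top_iff_summable.mp hne
  have hR : Summable (fun i : ℕ => (1 : ℝ) / (i + 1)) := by
    have h2 := NNReal.summable_coe.mpr hsum
    convert h2 using 2 with n
    simp
  have hfin : Summable (fun i : ℕ => (1 : ℝ) / (i : ℝ)) := by
    apply (summable_nat_add_iff 1).mp
    convert hR using 2 with n
    case e'_3 => rfl
    push_cast
    ring
  exact Real.not_summable_one_div_natCast hfin

/-- `∑_{i≥0} (2i+1)·C_i / 2^{2i+1} = ∞` in `ℝ≥0∞`: the expected hitting time of 0
by a simple symmetric random walk started at 1 is infinite. -/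
theorem catalan_expected_time_infinite :
    (∑' i : ℕ, ((2 * i + 1 : ℕ) : ℝ≥0∞) * (catalan i : ℝ≥0∞) / 2 ^ (2 * i + 1)) = ⊤ := by
  have key : ∀ i : ℕ, (1 : ℝ≥0∞) / (4 * (i + 1)) ≤
      ((2 * i + 1 : ℕ) : ℝ≥0∞) * (catalan i : ℝ≥0∞) / 2 ^ (2 * i + 1) := by
    intro i
    rw [ENNReal.le_div_iff_mul_le (Or.inl (pow_ne_zero _ two_ne_zero)) (Or.inl (by simp))]
    rw [one_div, ENNReal.inv_mul_le_iff (by simp) (by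
      refine ENNReal.mul_ne_top (by simp) (by simp))]
    calc (2 : ℝ≥0∞) ^ (2 * i + 1) = ((2 ^ (2 * i + 1) : ℕ) : ℝ≥0∞) := by push_cast; ring
      _ ≤ (((2 * i + 1) * catalan i * (4 * (i + 1)) : ℕ) : ℝ≥0∞) := by
          exact_mod_cast catalan_nat_bound i
      _ = 4 * (i + 1) * (((2 * i + 1 : ℕ) : ℝ≥0∞) * (catalan i : ℝ≥0∞)) := by push_cast; ring
  have hlow : (∑' i : ℕ, (1 : ℝ≥0∞) / (4 * (i + 1))) = ⊤ := by
    have : ∀ i : ℕ, (1 : ℝ≥0∞) / (4 * (i + 1)) = 4⁻¹ * (1 / (i + 1)) := by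
      intro i
      rw [one_div, one_div, ENNReal.mul_inv (Or.inl (by norm_num)) (Or.inl (by norm_num))]
    simp_rw [this]
    rw [ENNReal.tsum_mul_left, one_div_succ_tsum_top]
    simp [ENNReal.mul_top]
  exact top_le_iff.mp (hlow ▸ ENNReal.tsum_le_tsum key)
end

section
/- Let p ∈ [0,1] and define f : ℝ≥0∞ → ℝ≥0∞ by f(w) = p·w² + (1−p). The least fixed point of f equals 1 if p ≤ 1/2, and equals (1−p)/p if p > 1/2. -/
open scoped ENNReal

/-- For `p ∈ [0,1]`, the least fixed point of `f(w) = p·w² + (1−p)` on `ℝ≥0∞`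
(the supremum of the Kleene iterates from 0) equals `1` if `p ≤ 1/2`, and `(1−p)/p`
if `p > 1/2`. -/
theorem lfp_biased_walk (p : ℝ) (hp0 : 0 ≤ p) (hp1 : p ≤ 1) :
    let f : ℝ≥0∞ → ℝ≥0∞ :=
      fun w => ENNReal.ofReal p * w ^ 2 + ENNReal.ofReal (1 - p)
    (p ≤ 1 / 2 → (⨆ n : ℕ, f^[n] 0) = 1) ∧
    (1 / 2 < p → (⨆ n : ℕ, f^[n] 0) = ENNReal.ofReal ((1 - p) / p)) := by
  intro f
  have hmono : Monotone f := fun x y h => by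
    dsimp only [f]; gcongr
  set a : ℕ → ℝ≥0∞ := fun n => f^[n] 0 with ha
  have hamono : Monotone a := monotone_nat_of_le_succ fun n => by
    have := hmono.iterate n (show (0:ℝ≥0∞) ≤ f 0 from zero_le)
    simpa [ha, Function.iterate_succ_apply] using this
  set L : ℝ≥0∞ := ⨆ n, a n with hL
  -- f L = L
  have hsq : L ^ 2 = ⨆ n, (a n) ^ 2 := by
    rw [pow_two, hL, ENNReal.iSup_mul]
    refine le_antisymm (iSup_le fun i => ?_) (iSup_le fun n => ?_)
    · rw [ENNReal.mul_iSup]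
      refine iSup_le fun j => ?_
      calc a i * a j ≤ a (max i j) * a (max i j) :=
            mul_le_mul' (hamono (le_max_left i j)) (hamono (le_max_right i j))
        _ ≤ ⨆ n, a n ^ 2 := by
            rw [← pow_two]; exact le_iSup (fun n => a n ^ 2) _
    · rw [pow_two]
      exact le_trans (mul_le_mul' le_rfl (le_iSup a n)) (le_iSup (fun i => a i * ⨆ m, a m) n)
  have hfix : f L = L := by
    have h1 : f L = ⨆ n, f (a n) := by
      dsimp only [f]
      rw [hsq, ENNReal.mul_iSup, ENNReal.iSup_add]
    rw [h1]
    have h2 : ∀ n, f (a n) = a (n + 1) := fun n => by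
      simp [ha, Function.iterate_succ_apply']
    simp only [h2, hL]
    exact le_antisymm (iSup_le fun n => le_iSup a (n+1))
      (iSup_le fun n => le_trans (hamono (Nat.le_succ n)) (le_iSup (fun m => a (m+1)) n))
  -- least fixed point
  have hleast : ∀ x, f x = x → L ≤ x := by
    intro x hx
    rw [hL]
    refine iSup_le fun n => ?_
    induction n with
    | zero => simp [ha]
    | succ n ih =>
      have : a (n+1) = f (a n) := by simp [ha, Function.iterate_succ_apply']
      rw [this, ← hx]
      exact hmono ih
  -- 1 is always a fixed point
  have hf1 : f 1 = 1 := by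
    dsimp only [f]
    rw [one_pow, mul_one, ← ENNReal.ofReal_add hp0 (by linarith)]
    simp
  have hL1 : L ≤ 1 := hleast 1 hf1
  have hLne : L ≠ ⊤ := ne_top_of_le_ne_top ENNReal.one_ne_top hL1
  set x : ℝ := L.toReal with hx
  have hx0 : 0 ≤ x := ENNReal.toReal_nonneg
  have hx1 : x ≤ 1 := by
    rw [hx]
    exact ENNReal.toReal_le_of_le_ofReal zero_le_one (by simpa using hL1)
  -- real fixed point equation
  have heq : p * x ^ 2 + (1 - p) = x := by
    have := congrArg ENNReal.toReal hfix
    dsimp only [f] at this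
    rw [ENNReal.toReal_add (by
        exact ENNReal.mul_ne_top ENNReal.ofReal_ne_top (by
          exact ENNReal.pow_ne_top hLne)) ENNReal.ofReal_ne_top,
      ENNReal.toReal_mul, ENNReal.toReal_pow, ENNReal.toReal_ofReal hp0,
      ENNReal.toReal_ofReal (by linarith)] at this
    exact this
  have hfactor : (1 - x) * (1 - p - p * x) = 0 := by nlinarith [heq]
  constructor
  · intro hphalf
    have hxeq : x = 1 := by
      rcases mul_eq_zero.mp hfactor with h | h
      · linarith
      · -- p * x = 1 - p, with p ≤ 1/2, x ≤ 1
        have hx1' : x ≥ 1 := by nlinarith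
        linarith
    have : L = ENNReal.ofReal x := (ENNReal.ofReal_toReal hLne).symm
    rw [this, hxeq]; simp
  · intro hphalf
    have hp0' : 0 < p := by linarith
    set q : ℝ := (1 - p) / p with hq
    have hq0 : 0 ≤ q := div_nonneg (by linarith) hp0'.le
    have hq1 : q < 1 := by
      rw [hq, div_lt_one hp0']; linarith
    -- ofReal q is a fixed point
    have hfq : f (ENNReal.ofReal q) = ENNReal.ofReal q := by
      dsimp only [f]
      rw [← ENNReal.ofReal_pow hq0, ← ENNReal.ofReal_mul hp0,
        ← ENNReal.ofReal_add (by positivity) (by linarith)]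
      congr 1
      rw [hq]
      field_simp [hq]
      ring
    have hLq : L ≤ ENNReal.ofReal q := hleast _ hfq
    have hxq : x ≤ q :=
      ENNReal.toReal_le_of_le_ofReal hq0 hLq
    have hxeq : x = q := by
      rcases mul_eq_zero.mp hfactor with h | h
      · linarith
      · have : p * x = 1 - p := by linarith
        rw [hq]
        field_simp
        linarith
    calc L = ENNReal.ofReal x := (ENNReal.ofReal_toReal hLne).symm
      _ = ENNReal.ofReal q := by rw [hxeq]
end

section
/- Let p ∈ (0,1) and consider the system over ℝ≥0∞: w = p·f·w² + (1−p)·g, where f, g ∈ ℝ≥0 are parameters with 4·p·(1−p)·f·g ≤ 1. The least solution is w = (1 − √(1 − 4p(1−p)fg)) / (2pf) when f > 0, and w = (1−p)g when f = 0. -/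
open scoped ENNReal

/-- Least solution of the parametric equation `w = p·f·w² + (1−p)·g` over `ℝ≥0∞`,
for `p ∈ (0,1)`, parameters `f, g ≥ 0` with `4p(1−p)fg ≤ 1`: it equals
`(1 − √(1 − 4p(1−p)fg))/(2pf)` if `f > 0`, and `(1−p)g` if `f = 0`. -/
theorem dyck_parametric_least_solution (p f g : ℝ)
    (hp0 : 0 < p) (hp1 : p < 1) (hf : 0 ≤ f) (hg : 0 ≤ g)
    (hdisc : 4 * p * (1 - p) * f * g ≤ 1) :
    let Φ : ℝ≥0∞ → ℝ≥0∞ := fun w =>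
      ENNReal.ofReal p * ENNReal.ofReal f * w ^ 2
        + ENNReal.ofReal (1 - p) * ENNReal.ofReal g
    (f = 0 → (⨆ n : ℕ, Φ^[n] 0) = ENNReal.ofReal ((1 - p) * g)) ∧
    (0 < f → (⨆ n : ℕ, Φ^[n] 0) =
      ENNReal.ofReal ((1 - Real.sqrt (1 - 4 * p * (1 - p) * f * g)) / (2 * p * f))) := by
  intro Φ
  have hpg : (0:ℝ) ≤ (1 - p) * g := mul_nonneg (by linarith) hg
  have hΦofReal : ∀ x : ℝ, 0 ≤ x →
      Φ (ENNReal.ofReal x) = ENNReal.ofReal (p * f * x ^ 2 + (1 - p) * g) := by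
    intro x hx
    have h1 : (0:ℝ) ≤ p * f * x ^ 2 := by positivity
    rw [ENNReal.ofReal_add h1 hpg]
    simp only [Φ]
    rw [← ENNReal.ofReal_pow hx, ← ENNReal.ofReal_mul hp0.le,
      ← ENNReal.ofReal_mul (by positivity), ← ENNReal.ofReal_mul (by linarith)]
  have mono : Monotone Φ := by
    intro a b h
    simp only [Φ]
    gcongr
  have mono_seq : Monotone fun n => Φ^[n] (0 : ℝ≥0∞) := by
    apply monotone_nat_of_le_succ
    intro n
    rw [Function.iterate_succ_apply]
    exact (mono.iterate n) zero_le
  constructor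
  · intro hf0
    subst hf0
    have hΦ : ∀ w, Φ w = ENNReal.ofReal (1 - p) * ENNReal.ofReal g := by
      intro w; simp [Φ]
    apply le_antisymm
    · refine iSup_le fun n => ?_
      cases n with
      | zero => simp
      | succ n =>
          rw [Function.iterate_succ_apply', hΦ, ENNReal.ofReal_mul (by linarith)]
    · calc ENNReal.ofReal ((1 - p) * g) = Φ^[1] 0 := by
            rw [Function.iterate_one, hΦ, ENNReal.ofReal_mul (by linarith)]
        _ ≤ _ := le_iSup (fun n : ℕ => Φ^[n] (0:ℝ≥0∞)) 1
  · intro hfpos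
    set D : ℝ := 1 - 4 * p * (1 - p) * f * g with hD
    have hD0 : 0 ≤ D := by linarith
    have hs0 : 0 ≤ Real.sqrt D := Real.sqrt_nonneg D
    have hs1 : Real.sqrt D ≤ 1 := by
      have h4 : (0:ℝ) ≤ 4 * p * (1 - p) * f * g :=
        mul_nonneg (mul_nonneg (mul_nonneg (by linarith) (by linarith)) hf) hg
      rw [show (1:ℝ) = Real.sqrt 1 by simp]
      exact Real.sqrt_le_sqrt (by linarith)
    have hssq : Real.sqrt D ^ 2 = D := Real.sq_sqrt hD0
    have h2pf : (0:ℝ) < 2 * p * f := by positivity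
    set L : ℝ := (1 - Real.sqrt D) / (2 * p * f) with hLdef
    have hL0 : 0 ≤ L := div_nonneg (by linarith) h2pf.le
    have hLfix : p * f * L ^ 2 + (1 - p) * g = L := by
      rw [hLdef]
      field_simp
      nlinarith [hssq]
    -- every iterate is below L
    have hub : ∀ n, Φ^[n] (0 : ℝ≥0∞) ≤ ENNReal.ofReal L := by
      intro n
      induction n with
      | zero => simp
      | succ n ih =>
          rw [Function.iterate_succ_apply']
          calc Φ (Φ^[n] 0) ≤ Φ (ENNReal.ofReal L) := mono ih
            _ = ENNReal.ofReal L := by rw [hΦofReal L hL0, hLfix]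
    set S : ℝ≥0∞ := ⨆ n : ℕ, Φ^[n] 0 with hSdef
    have hSle : S ≤ ENNReal.ofReal L := iSup_le hub
    have hStop : S ≠ ⊤ := ne_top_of_le_ne_top ENNReal.ofReal_ne_top hSle
    -- S is a fixed point of Φ
    have hsq : S * S = ⨆ n : ℕ, Φ^[n] 0 * Φ^[n] 0 := by
      rw [hSdef, ENNReal.iSup_mul]
      refine le_antisymm (iSup_le fun i => ?_) (iSup_le fun n => ?_)
      · rw [ENNReal.mul_iSup]
        refine iSup_le fun j => ?_
        calc Φ^[i] 0 * Φ^[j] 0 ≤ Φ^[max i j] 0 * Φ^[max i j] 0 :=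
              mul_le_mul' (mono_seq (le_max_left i j)) (mono_seq (le_max_right i j))
          _ ≤ _ := le_iSup (fun n => Φ^[n] (0:ℝ≥0∞) * Φ^[n] 0) (max i j)
      · calc Φ^[n] 0 * Φ^[n] 0 ≤ Φ^[n] 0 * ⨆ m : ℕ, Φ^[m] 0 :=
              mul_le_mul' le_rfl (le_iSup (fun m : ℕ => Φ^[m] (0:ℝ≥0∞)) n)
          _ ≤ _ := le_iSup (fun m : ℕ => Φ^[m] (0:ℝ≥0∞) * (⨆ k : ℕ, Φ^[k] 0)) n
    have hfix : Φ S = S := by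
      apply le_antisymm
      · have hΦS : Φ S = ⨆ n : ℕ, (ENNReal.ofReal p * ENNReal.ofReal f *
            (Φ^[n] 0 * Φ^[n] 0) + ENNReal.ofReal (1 - p) * ENNReal.ofReal g) := by
          show ENNReal.ofReal p * ENNReal.ofReal f * S ^ 2 +
              ENNReal.ofReal (1 - p) * ENNReal.ofReal g = _
          rw [sq, hsq, ENNReal.mul_iSup, ENNReal.iSup_add]
        rw [hΦS]
        refine iSup_le fun n => ?_
        have hterm : ENNReal.ofReal p * ENNReal.ofReal f * (Φ^[n] 0 * Φ^[n] 0) +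
            ENNReal.ofReal (1 - p) * ENNReal.ofReal g = Φ^[n+1] 0 := by
          rw [Function.iterate_succ_apply']
          simp only [Φ, sq]
        rw [hterm]
        exact le_iSup (fun n : ℕ => Φ^[n] (0:ℝ≥0∞)) (n + 1)
      · refine iSup_le fun n => ?_
        calc Φ^[n] 0 ≤ Φ^[n+1] 0 := mono_seq (Nat.le_succ n)
          _ = Φ (Φ^[n] 0) := Function.iterate_succ_apply' Φ n 0
          _ ≤ Φ S := mono (le_iSup (fun m : ℕ => Φ^[m] (0:ℝ≥0∞)) n)
    -- extract the real equation
    set s : ℝ := S.toReal with hsdef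
    have hsnn : 0 ≤ s := ENNReal.toReal_nonneg
    have hSs : S = ENNReal.ofReal s := (ENNReal.ofReal_toReal hStop).symm
    have heq : p * f * s ^ 2 + (1 - p) * g = s := by
      have := hfix
      rw [hSs, hΦofReal s hsnn] at this
      have h1 : (0:ℝ) ≤ p * f * s ^ 2 + (1 - p) * g := by positivity
      exact (ENNReal.ofReal_eq_ofReal_iff h1 hsnn).mp this
    have hsleL : s ≤ L := by
      rw [hSs] at hSle
      exact (ENNReal.ofReal_le_ofReal_iff hL0).mp hSle
    have hsL : s = L := by
      have hkey : -Real.sqrt D ≤ 2 * p * f * s - 1 := by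
        nlinarith [heq, hssq, hs0, hsleL, h2pf]
      have : L ≤ s := by
        rw [hLdef, div_le_iff₀ h2pf]
        nlinarith [hkey]
      linarith
    rw [hSs, hsL]
end

section
/- Let p ∈ [0,1] and consider the map F : ℝ≥0∞ × ℝ≥0∞ → ℝ≥0∞ × ℝ≥0∞ defined by F(u, v) = (p·u·v + (1−p), p·v² + (1−p)). Then the least fixed point of F (the supremum of Kleene iterates from (0,0)) has equal components, both equal to the least fixed point of w ↦ p·w² + (1−p). -/
open scoped ENNReal

/-- For `p ∈ [0,1]`, the least fixed point (Kleene supremum from `(0,0)`) of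
`F(u,v) = (p·u·v + (1−p), p·v² + (1−p))` on `ℝ≥0∞ × ℝ≥0∞` has equal components,
both equal to the least fixed point of `w ↦ p·w² + (1−p)`. -/
theorem phors_system_collapse (p : ℝ) (hp0 : 0 ≤ p) (hp1 : p ≤ 1) :
    let F : ℝ≥0∞ × ℝ≥0∞ → ℝ≥0∞ × ℝ≥0∞ := fun uv =>
      (ENNReal.ofReal p * uv.1 * uv.2 + ENNReal.ofReal (1 - p),
       ENNReal.ofReal p * uv.2 ^ 2 + ENNReal.ofReal (1 - p))
    let g : ℝ≥0∞ → ℝ≥0∞ := fun w => ENNReal.ofReal p * w ^ 2 + ENNReal.ofReal (1 - p)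
    (⨆ n : ℕ, F^[n] (0, 0)).1 = (⨆ n : ℕ, F^[n] (0, 0)).2 ∧
    (⨆ n : ℕ, F^[n] (0, 0)).2 = ⨆ n : ℕ, g^[n] 0 := by
  intro F g
  set a : ℕ → ℝ≥0∞ := fun n => (F^[n] (0, 0)).1 with ha_def
  set b : ℕ → ℝ≥0∞ := fun n => (F^[n] (0, 0)).2 with hb_def
  have hstep : ∀ n, F^[n+1] (0, 0) = F (F^[n] (0, 0)) := fun n =>
    Function.iterate_succ_apply' F n (0, 0)
  have ha : ∀ n, a (n+1) = ENNReal.ofReal p * a n * b n + ENNReal.ofReal (1 - p) := by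
    intro n; simp only [ha_def, hb_def, hstep]; rfl
  have hb : ∀ n, b (n+1) = g (b n) := by
    intro n; simp only [hb_def, hstep]; rfl
  have hbg : ∀ n, b n = g^[n] 0 := by
    intro n; induction n with
    | zero => rfl
    | succ n ih => rw [hb, ih, Function.iterate_succ_apply']
  have hgmono : Monotone g := by
    intro x y hxy
    exact add_le_add (mul_le_mul_right (pow_le_pow_left' hxy 2) _) le_rfl
  have hbmono : ∀ n, b n ≤ b (n+1) := by
    intro n; induction n with
    | zero => exact zero_le
    | succ n ih => rw [hb, hb]; exact hgmono ih
  have hab : ∀ n, a n ≤ b n := by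
    intro n; induction n with
    | zero => exact le_rfl
    | succ n ih =>
      rw [ha, hb]
      refine add_le_add ?_ le_rfl
      calc ENNReal.ofReal p * a n * b n ≤ ENNReal.ofReal p * b n * b n := by
            exact mul_le_mul_left (mul_le_mul_right ih _) _
        _ = ENNReal.ofReal p * b n ^ 2 := by ring
  have hba : ∀ n, b n ≤ a (n+1) := by
    intro n; induction n with
    | zero => exact zero_le
    | succ n ih =>
      rw [ha (n+1)]; nth_rewrite 1 [hb n]
      show ENNReal.ofReal p * b n ^ 2 + ENNReal.ofReal (1 - p) ≤ _
      refine add_le_add ?_ le_rfl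
      calc ENNReal.ofReal p * b n ^ 2 = ENNReal.ofReal p * b n * b n := by ring
        _ ≤ ENNReal.ofReal p * a (n+1) * b (n+1) :=
            mul_le_mul' (mul_le_mul_right ih _) (hbmono n)
  have hfst : (⨆ n : ℕ, F^[n] (0, 0)).1 = ⨆ n, a n := by
    simp only [ha_def]
    exact Prod.fst_iSup _
  have hsnd : (⨆ n : ℕ, F^[n] (0, 0)).2 = ⨆ n, b n := by
    simp only [hb_def]
    exact Prod.snd_iSup _
  have hkey : (⨆ n, a n) = ⨆ n, b n := by
    apply le_antisymm
    · exact iSup_mono hab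
    · exact iSup_le fun n => (hba n).trans (le_iSup a (n+1))
  refine ⟨by rw [hfst, hsnd, hkey], ?_⟩
  rw [hsnd]
  exact iSup_congr hbg
end
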